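/- arXiv:2404.09568 — 2 statements merged into one kernel-verified Lean document; each statement's English description precedes it below -/
import Mathlib

section
/- Let (B_t)_{t≥0} be a standard one-dimensional Brownian motion and let Ṽ : ℝ → ℝ be continuous with Ṽ(x) ≤ Ã for all x. Let Ψ : ℝ → ℝ be measurable with ∫ Ψ(x)² dx = 1 and suppose that for some λ ∈ ℝ and all t > 0, x ∈ ℝ: Ψ(x) = e^{λ t} E[exp(∫₀^t Ṽ(x + B_s) ds) Ψ(x + B_t)]. Then λ + Ã > 0 and for every x ∈ ℝ: |Ψ(x)| ≤ (e/π)^{1/4} (λ + Ã)^{1/4}. -/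
open MeasureTheory ProbabilityTheory Real Filter

/-- Standard one-dimensional Brownian motion (started at 0): a.s. continuous paths,
independent increments, and Gaussian increments of variance `t - s`. -/
def IsBrownianMotion {Ω : Type} [MeasurableSpace Ω] (P : Measure Ω) (B : ℝ → Ω → ℝ) : Prop :=
  IsProbabilityMeasure P ∧
  (∀ t : ℝ, Measurable (B t)) ∧
  (∀ ω, B 0 ω = 0) ∧
  (∀ ω, Continuous fun t => B t ω) ∧
  (∀ s t : ℝ, 0 ≤ s → s ≤ t →
    Measure.map (fun ω => B t ω - B s ω) P = gaussianReal 0 (Real.toNNReal (t - s))) ∧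
  (∀ (n : ℕ) (t : Fin (n + 1) → ℝ), Monotone t → (∀ i, 0 ≤ t i) →
    iIndepFun (m := fun _ => Real.measurableSpace)
      (fun i : Fin n => fun ω => B (t i.succ) ω - B (t i.castSucc) ω) P)

open scoped NNReal ENNReal Topology

/-! Since `Ṽ ≤ Ã`, the eigenvalue equation gives `|Ψ(x)| ≤ e^{(λ+Ã)t} E|Ψ(x + B_t)|`, and
Cauchy–Schwarz against the heat kernel `p_t` bounds the expectation by
`‖p_t‖₂ ‖Ψ‖₂ = (4πt)^{-1/4}`. If `λ + Ã ≤ 0`, letting `t → ∞` forces `Ψ = 0`, contradicting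
`‖Ψ‖₂ = 1`; otherwise `t = 1/(4(λ+Ã))` minimizes `e^{(λ+Ã)t} (4πt)^{-1/4}` and gives the bound. -/

lemma eLpNorm_two_eq_sqrt_integral_sq {α : Type*} [MeasurableSpace α] {μ : Measure α} {f : α → ℝ}
    (hf : AEStronglyMeasurable f μ) (hsq : Integrable (fun x => f x ^ 2) μ) :
    eLpNorm f 2 μ = ENNReal.ofReal √(∫ x, f x ^ 2 ∂μ) := by
  rw [((memLp_two_iff_integrable_sq hf).2 hsq).eLpNorm_eq_integral_rpow_norm two_ne_zero
    ENNReal.ofNat_ne_top, Real.sqrt_eq_rpow]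
  simp

lemma gaussianPDFReal_sq (μ : ℝ) (v : ℝ≥0) (x : ℝ) :
    gaussianPDFReal μ v x ^ 2 = (√(4 * π * v))⁻¹ * gaussianPDFReal μ (v / 2) x := by
  simp only [gaussianPDFReal, mul_pow, inv_pow, ← Real.exp_nat_mul, NNReal.coe_div,
    NNReal.coe_ofNat]
  rw [Real.sq_sqrt (by positivity), ← mul_assoc, ← mul_inv, ← Real.sqrt_mul (by positivity)]
  congr 1
  · rw [show 4 * π * v * (2 * π * (v / 2)) = (2 * π * v) ^ 2 by ring, Real.sqrt_sq (by positivity)]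
  · congr 1
    field_simp
    ring

lemma eLpNorm_gaussianPDFReal_two (μ : ℝ) {v : ℝ≥0} (hv : v ≠ 0) :
    eLpNorm (gaussianPDFReal μ v) 2 volume = ENNReal.ofReal ((4 * π * v) ^ (-(1 / 4 : ℝ))) := by
  have hsq : Integrable fun x => gaussianPDFReal μ v x ^ 2 := by
    simp_rw [gaussianPDFReal_sq]
    exact (integrable_gaussianPDFReal μ _).const_mul _
  have hv2 : v / 2 ≠ 0 := by simpa using hv
  rw [eLpNorm_two_eq_sqrt_integral_sq (stronglyMeasurable_gaussianPDFReal μ v).aestronglyMeasurable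
    hsq]
  simp only [gaussianPDFReal_sq, integral_const_mul, integral_gaussianPDFReal_eq_one μ hv2, mul_one]
  rw [Real.sqrt_eq_rpow, Real.sqrt_eq_rpow, ← Real.rpow_neg (by positivity),
    ← Real.rpow_mul (by positivity)]
  norm_num

lemma lintegral_enorm_gaussianReal_le (μ : ℝ) {v : ℝ≥0} (hv : v ≠ 0) {f : ℝ → ℝ}
    (hf : AEStronglyMeasurable f) :
    ∫⁻ y, ‖f y‖ₑ ∂gaussianReal μ v ≤
      ENNReal.ofReal ((4 * π * v) ^ (-(1 / 4 : ℝ))) * eLpNorm f 2 volume := by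
  rw [gaussianReal_of_var_ne_zero μ hv,
    lintegral_withDensity_eq_lintegral_mul₀ (measurable_gaussianPDF μ v).aemeasurable
      hf.enorm, ← eLpNorm_gaussianPDFReal_two μ hv]
  calc ∫⁻ y, (gaussianPDF μ v * fun y => ‖f y‖ₑ) y
      = eLpNorm (gaussianPDFReal μ v • f) 1 volume := by
        rw [eLpNorm_one_eq_lintegral_enorm]
        refine lintegral_congr fun y => ?_
        simp [gaussianPDF, Real.enorm_of_nonneg (gaussianPDFReal_nonneg μ v y)]
    _ ≤ _ := eLpNorm_smul_le_mul_eLpNorm hf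
        (stronglyMeasurable_gaussianPDFReal μ v).aestronglyMeasurable

lemma exp_mul_rpow_at_inv_four_mul {a : ℝ} (ha : 0 < a) :
    exp (a * (1 / (4 * a))) * (4 * π * (1 / (4 * a))) ^ (-(1 / 4 : ℝ)) =
      (exp 1 / π) ^ (1 / 4 : ℝ) * a ^ (1 / 4 : ℝ) := by
  have hat : a * (1 / (4 * a)) = 1 / 4 := by field_simp
  have hπt : 4 * π * (1 / (4 * a)) = (a / π)⁻¹ := by field_simp
  rw [hat, hπt, Real.inv_rpow (by positivity), Real.rpow_neg (by positivity), inv_inv,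
    ← Real.exp_one_rpow, Real.div_rpow (exp_nonneg 1) pi_pos.le,
    Real.div_rpow ha.le pi_pos.le]
  ring

lemma tendsto_four_pi_mul_rpow_neg_quarter_atTop :
    Tendsto (fun t : ℝ => (4 * π * t) ^ (-(1 / 4 : ℝ))) atTop (𝓝 0) :=
  (tendsto_rpow_neg_atTop (by norm_num)).comp (tendsto_id.const_mul_atTop (by positivity))

lemma intervalIntegral_le_mul_of_le {f : ℝ → ℝ} {A t : ℝ} (hf : IntervalIntegrable f volume 0 t)
    (ht : 0 ≤ t) (hfA : ∀ s, f s ≤ A) : ∫ s in 0..t, f s ≤ A * t := by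
  simpa [mul_comm] using
    intervalIntegral.integral_mono_on ht hf intervalIntegrable_const fun s _ => hfA s

namespace IsBrownianMotion

variable {Ω : Type} [MeasurableSpace Ω] {P : Measure Ω} {B : ℝ → Ω → ℝ}

lemma measurable (hB : IsBrownianMotion P B) (t : ℝ) : Measurable (B t) := hB.2.1 t

lemma continuous_path (hB : IsBrownianMotion P B) (ω : Ω) : Continuous fun t => B t ω :=
  hB.2.2.2.1 ω

lemma map_eq_gaussianReal (hB : IsBrownianMotion P B) {t : ℝ} (ht : 0 ≤ t) :
    P.map (B t) = gaussianReal 0 t.toNNReal := by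
  obtain ⟨-, -, hB0, -, hBinc, -⟩ := hB
  simpa [hB0] using hBinc 0 t le_rfl ht

lemma lintegral_enorm_comp_le (hB : IsBrownianMotion P B) {t : ℝ} (ht : 0 < t) {g : ℝ → ℝ}
    (hg : Measurable g) :
    ∫⁻ ω, ‖g (B t ω)‖ₑ ∂P ≤ ENNReal.ofReal ((4 * π * t) ^ (-(1 / 4 : ℝ))) * eLpNorm g 2 volume := by
  rw [← lintegral_map hg.enorm (hB.measurable t), hB.map_eq_gaussianReal ht.le]
  simpa [ht.le] using
    lintegral_enorm_gaussianReal_le 0 (Real.toNNReal_pos.2 ht).ne' hg.aestronglyMeasurable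

theorem enorm_integral_feynmanKac_le (hB : IsBrownianMotion P B) {V : ℝ → ℝ} {A : ℝ}
    (hVc : Continuous V) (hVA : ∀ x, V x ≤ A) {g : ℝ → ℝ} (hg : Measurable g) {t : ℝ}
    (ht : 0 < t) (x : ℝ) :
    ‖∫ ω, exp (∫ s in 0..t, V (x + B s ω)) * g (x + B t ω) ∂P‖ₑ ≤
      ENNReal.ofReal (exp (A * t) * (4 * π * t) ^ (-(1 / 4 : ℝ))) * eLpNorm g 2 volume := by
  have hpath : ∀ ω, ∫ s in 0..t, V (x + B s ω) ≤ A * t := fun ω =>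
    intervalIntegral_le_mul_of_le
      ((hVc.comp (continuous_const.add (hB.continuous_path ω))).intervalIntegrable _ _) ht.le
      fun s => hVA _
  have hshift : eLpNorm (fun y => g (x + y)) 2 volume = eLpNorm g 2 volume :=
    eLpNorm_comp_measurePreserving hg.aestronglyMeasurable (measurePreserving_add_left volume x)
  calc _ ≤ ∫⁻ ω, ‖exp (∫ s in 0..t, V (x + B s ω)) * g (x + B t ω)‖ₑ ∂P :=
        enorm_integral_le_lintegral_enorm _
    _ ≤ ∫⁻ ω, ENNReal.ofReal (exp (A * t)) * ‖g (x + B t ω)‖ₑ ∂P := by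
        refine lintegral_mono fun ω => ?_
        rw [enorm_mul, Real.enorm_of_nonneg (exp_nonneg _)]
        gcongr
        exact hpath ω
    _ ≤ ENNReal.ofReal (exp (A * t)) *
          (ENNReal.ofReal ((4 * π * t) ^ (-(1 / 4 : ℝ))) * eLpNorm g 2 volume) := by
        rw [lintegral_const_mul' _ _ ENNReal.ofReal_ne_top, ← hshift]
        gcongr
        exact hB.lintegral_enorm_comp_le ht (hg.comp (measurable_const_add x))
    _ = _ := by rw [← mul_assoc, ← ENNReal.ofReal_mul (exp_nonneg _)]

theorem abs_le_of_eq_feynmanKac (hB : IsBrownianMotion P B) {V : ℝ → ℝ} {A : ℝ}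
    (hVc : Continuous V) (hVA : ∀ x, V x ≤ A) {Ψ : ℝ → ℝ} (hΨm : Measurable Ψ)
    (hΨ : eLpNorm Ψ 2 volume = 1) {lam t : ℝ} (ht : 0 < t) {x : ℝ}
    (hx : Ψ x = exp (lam * t) * ∫ ω, exp (∫ s in 0..t, V (x + B s ω)) * Ψ (x + B t ω) ∂P) :
    |Ψ x| ≤ exp ((lam + A) * t) * (4 * π * t) ^ (-(1 / 4 : ℝ)) := by
  have hI := hB.enorm_integral_feynmanKac_le hVc hVA hΨm ht x
  rw [hΨ, mul_one, Real.enorm_eq_ofReal_abs, ENNReal.ofReal_le_ofReal_iff (by positivity)] at hI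
  calc |Ψ x| ≤ exp (lam * t) * (exp (A * t) * (4 * π * t) ^ (-(1 / 4 : ℝ))) := by
        rw [hx, abs_mul, abs_of_pos (exp_pos _)]
        gcongr
    _ = _ := by rw [← mul_assoc, ← exp_add, add_mul]

end IsBrownianMotion

/-- Proposition 3.4(ii), `eq:boundPsik`: an L²-normalized eigenfunction of the
Feynman–Kac semigroup with eigenvalue `e^{-λt}` satisfies `|Ψ(x)| ≤ (e/π)^{1/4}(λ+Ã)^{1/4}`. -/
theorem eigenfunction_uniform_bound
    {Ω : Type} [MeasurableSpace Ω] (P : Measure Ω) (B : ℝ → Ω → ℝ)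
    (hB : IsBrownianMotion P B)
    (Vt : ℝ → ℝ) (Atil : ℝ) (hVc : Continuous Vt) (hVb : ∀ x, Vt x ≤ Atil)
    (Ψ : ℝ → ℝ) (hΨm : Measurable Ψ) (hΨnorm : (∫ x : ℝ, (Ψ x) ^ 2) = 1)
    (lam : ℝ)
    (heigen : ∀ t : ℝ, 0 < t → ∀ x : ℝ,
      Ψ x = Real.exp (lam * t) *
        ∫ ω, Real.exp (∫ s in (0:ℝ)..t, Vt (x + B s ω)) * Ψ (x + B t ω) ∂P) :
    0 < lam + Atil ∧
      ∀ x : ℝ, |Ψ x| ≤ (Real.exp 1 / Real.pi) ^ ((1 : ℝ) / 4) * (lam + Atil) ^ ((1 : ℝ) / 4) := by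
  have hΨ : eLpNorm Ψ 2 volume = 1 := by
    rw [eLpNorm_two_eq_sqrt_integral_sq hΨm.aestronglyMeasurable
      (integrable_of_integral_eq_one hΨnorm), hΨnorm, sqrt_one, ENNReal.ofReal_one]
  have hbound : ∀ t, 0 < t → ∀ x, |Ψ x| ≤ exp ((lam + Atil) * t) * (4 * π * t) ^ (-(1 / 4 : ℝ)) :=
    fun t ht x => hB.abs_le_of_eq_feynmanKac hVc hVb hΨm hΨ ht (heigen t ht x)
  have hpos : 0 < lam + Atil := by
    by_contra! ha
    have hzero : ∀ x, Ψ x = 0 := fun x =>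
      abs_nonpos_iff.1 <| ge_of_tendsto tendsto_four_pi_mul_rpow_neg_quarter_atTop <|
        (eventually_gt_atTop 0).mono fun t ht => (hbound t ht x).trans <|
          mul_le_of_le_one_left (by positivity)
            (exp_le_one_iff.2 (mul_nonpos_of_nonpos_of_nonneg ha ht.le))
    simp [hzero] at hΨnorm
  exact ⟨hpos, fun x => (hbound _ (by positivity) x).trans_eq (exp_mul_rpow_at_inv_four_mul hpos)⟩
end

section
/- Let (B_t)_{t≥0} be a standard one-dimensional Brownian motion and Ṽ : ℝ → ℝ continuous with Ṽ(x) ≤ Ã for all x. Let (Ψ_k)_{k≥0} be an orthonormal basis of L²(ℝ, dx) consisting of continuous functions, and let (λ_k)_{k≥0} be a nondecreasing sequence of reals with ∑_{k≥0} e^{−λ_k t} < ∞ for every t > 0, such that for every k, t > 0 and x: E[exp(∫₀^t Ṽ(x + B_s) ds) Ψ_k(x + B_t)] = e^{−λ_k t} Ψ_k(x). Then: (i) for all t > 0 and x, y ∈ ℝ, ∑_{k≥0} e^{−λ_k t} |Ψ_k(x)| |Ψ_k(y)| ≤ e^{Ã t} / √(2π t); (ii) the function p̃(t, x, y) := ∑_{k≥0}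 e^{−λ_k t} Ψ_k(x) Ψ_k(y) is a transition density: for every φ ∈ L²(ℝ, dx), every t > 0 and x, E[exp(∫₀^t Ṽ(x + B_s) ds) φ(x + B_t)] = ∫ p̃(t, x, y) φ(y) dy; (iii) p̃ is continuous on (0, ∞) × ℝ². -/
/-!
For fixed `t > 0` and `x`, the Feynman–Kac functional `φ ↦ E[exp(∫₀ᵗ Ṽ(x + B_s) ds) φ(x + B_t)]`
is integration against a density `h_{t,x} ≤ e^{Ãt} p_t(x, ·)`, where `p_t` is the heat kernel,
so `h_{t,x} ∈ L²` and, by the eigenvalue relation, its coefficients in the basis `(Ψ_k)` are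
`e^{-λ_k t} Ψ_k(x)`. Bessel's inequality at time `t/2` bounds the diagonal
`∑ e^{-λ_k t} Ψ_k(x)²` by `e^{Ãt} ‖p_{t/2}(x, ·)‖² = e^{Ãt}/√(2πt)`, and AM–GM gives (i).
Completeness identifies `h_{t,x}` with the pointwise sum `p̃(t, x, ·)`, giving (ii). Splitting
`e^{-λ_k t} = e^{-λ_k (t - s)} e^{-λ_k s}` and bounding the second factor by (i) at a fixed time
`s` makes the series locally uniformly convergent in `t`, giving (iii).
-/

open MeasureTheory ProbabilityTheory Real Filter

open scoped NNReal ENNReal InnerProductSpace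

namespace ProbabilityTheory

lemma gaussianPDFReal_sq (m : ℝ) (v : ℝ≥0) (y : ℝ) :
    gaussianPDFReal m v y ^ 2 = (2 * √(π * v))⁻¹ * gaussianPDFReal m (v / 2) y := by
  have hsqrt : √(2 * π * v) = √2 * √(π * v) := by rw [mul_assoc, sqrt_mul zero_le_two]
  have hsqrt_half : √(2 * π * (v / 2 : ℝ≥0)) = √(π * v) := by
    congr 1; push_cast; ring
  have hexp : 2 * (-(y - m) ^ 2 / (2 * v)) = -(y - m) ^ 2 / (2 * (v / 2 : ℝ≥0)) := by
    push_cast; ring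
  simp only [gaussianPDFReal, mul_pow, ← exp_nat_mul, Nat.cast_ofNat, hexp, hsqrt_half, hsqrt,
    mul_inv, inv_pow, sq_sqrt zero_le_two]
  ring

lemma integrable_gaussianPDFReal_sq (m : ℝ) (v : ℝ≥0) :
    Integrable fun y => gaussianPDFReal m v y ^ 2 := by
  simp_rw [gaussianPDFReal_sq]
  exact (integrable_gaussianPDFReal m (v / 2)).const_mul _

lemma integral_gaussianPDFReal_sq (m : ℝ) {v : ℝ≥0} (hv : v ≠ 0) :
    ∫ y, gaussianPDFReal m v y ^ 2 = (2 * √(π * v))⁻¹ := by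
  simp_rw [gaussianPDFReal_sq]
  rw [integral_const_mul, integral_gaussianPDFReal_eq_one m (by simpa using hv), mul_one]

lemma memLp_two_gaussianPDFReal (m : ℝ) (v : ℝ≥0) : MemLp (gaussianPDFReal m v) 2 :=
  (memLp_two_iff_integrable_sq (stronglyMeasurable_gaussianPDFReal m v).aestronglyMeasurable).2
    (integrable_gaussianPDFReal_sq m v)

end ProbabilityTheory

namespace MeasureTheory

variable {α : Type*} [MeasurableSpace α] {μ : Measure α}

lemma MemLp.inner_toLp_toLp {f g : α → ℝ} (hf : MemLp f 2 μ) (hg : MemLp g 2 μ) :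
    ⟪hf.toLp f, hg.toLp g⟫_ℝ = ∫ x, f x * g x ∂μ := by
  rw [L2.inner_def]
  refine integral_congr_ae ?_
  filter_upwards [hf.coeFn_toLp, hg.coeFn_toLp] with x hfx hgx
  rw [hfx, hgx, real_inner_eq_re_inner, RCLike.inner_apply, conj_trivial, mul_comm]
  rfl

lemma memLp_two_of_integral_mul_self_eq_one {f : α → ℝ} (hf : AEStronglyMeasurable f μ)
    (h : ∫ x, f x * f x ∂μ = 1) : MemLp f 2 μ := by
  refine (memLp_two_iff_integrable_sq hf).2 (Integrable.of_integral_ne_zero ?_)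
  simp_rw [sq, h]
  exact one_ne_zero

section OrthonormalFamily

variable {ι : Type*} [DecidableEq ι] {Ψ : ι → α → ℝ}

lemma orthonormal_toLp (hΨ : ∀ k, MemLp (Ψ k) 2 μ)
    (horth : ∀ j k, ∫ x, Ψ j x * Ψ k x ∂μ = if j = k then 1 else 0) :
    Orthonormal ℝ fun k => (hΨ k).toLp (Ψ k) := by
  rw [orthonormal_iff_ite]
  intro j k
  rw [MemLp.inner_toLp_toLp, horth]

lemma summable_sq_integral_mul (hΨ : ∀ k, MemLp (Ψ k) 2 μ)
    (horth : ∀ j k, ∫ x, Ψ j x * Ψ k x ∂μ = if j = k then 1 else 0)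
    {f : α → ℝ} (hf : MemLp f 2 μ) :
    Summable fun k => (∫ x, f x * Ψ k x ∂μ) ^ 2 := by
  simpa only [MemLp.inner_toLp_toLp, Real.norm_eq_abs, sq_abs, mul_comm (Ψ _ _)]
    using (orthonormal_toLp hΨ horth).inner_products_summable (hf.toLp f)

lemma tsum_sq_integral_mul_le (hΨ : ∀ k, MemLp (Ψ k) 2 μ)
    (horth : ∀ j k, ∫ x, Ψ j x * Ψ k x ∂μ = if j = k then 1 else 0)
    {f : α → ℝ} (hf : MemLp f 2 μ) :
    ∑' k, (∫ x, f x * Ψ k x ∂μ) ^ 2 ≤ ∫ x, f x ^ 2 ∂μ := by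
  have bessel := (orthonormal_toLp hΨ horth).tsum_inner_products_le (hf.toLp f)
  rw [← real_inner_self_eq_norm_sq, MemLp.inner_toLp_toLp] at bessel
  simpa only [MemLp.inner_toLp_toLp, Real.norm_eq_abs, sq_abs, mul_comm (Ψ _ _), ← sq]
    using bessel

lemma hasSum_integral_mul_smul_toLp (hΨ : ∀ k, MemLp (Ψ k) 2 μ)
    (horth : ∀ j k, ∫ x, Ψ j x * Ψ k x ∂μ = if j = k then 1 else 0)
    (hcomplete : ∀ f, MemLp f 2 μ → (∀ k, ∫ x, f x * Ψ k x ∂μ = 0) → f =ᵐ[μ] 0)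
    {f : α → ℝ} (hf : MemLp f 2 μ) :
    HasSum (fun k => (∫ x, f x * Ψ k x ∂μ) • (hΨ k).toLp (Ψ k)) (hf.toLp f) := by
  have hON := orthonormal_toLp hΨ horth
  have hbot : (Submodule.span ℝ (Set.range fun k => (hΨ k).toLp (Ψ k)))ᗮ = ⊥ := by
    refine (Submodule.eq_bot_iff _).2 fun g hg => Lp.eq_zero_iff_ae_eq_zero.2 ?_
    refine hcomplete g (Lp.memLp g) fun k => ?_
    rw [← (Lp.memLp g).inner_toLp_toLp (hΨ k), Lp.toLp_coeFn g (Lp.memLp g), real_inner_comm]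
    exact hg _ (Submodule.subset_span ⟨k, rfl⟩)
  have hrepr := (HilbertBasis.mkOfOrthogonalEqBot hON hbot).hasSum_repr (hf.toLp f)
  simp only [HilbertBasis.repr_apply_apply, HilbertBasis.coe_mkOfOrthogonalEqBot,
    MemLp.inner_toLp_toLp, mul_comm (Ψ _ _)] at hrepr
  exact hrepr

end OrthonormalFamily

-- A subsequence of the partial sums converges almost everywhere.
lemma ae_eq_tsum_integral_mul {Ψ : ℕ → α → ℝ} (hΨ : ∀ k, MemLp (Ψ k) 2 μ)
    (horth : ∀ j k, ∫ x, Ψ j x * Ψ k x ∂μ = if j = k then 1 else 0)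
    (hcomplete : ∀ f, MemLp f 2 μ → (∀ k, ∫ x, f x * Ψ k x ∂μ = 0) → f =ᵐ[μ] 0)
    {f : α → ℝ} (hf : MemLp f 2 μ)
    (hsum : ∀ᵐ y ∂μ, Summable fun k => (∫ x, f x * Ψ k x ∂μ) * Ψ k y) :
    f =ᵐ[μ] fun y => ∑' k, (∫ x, f x * Ψ k x ∂μ) * Ψ k y := by
  set c : ℕ → ℝ := fun k => ∫ x, f x * Ψ k x ∂μ
  have hL2 := (hasSum_integral_mul_smul_toLp hΨ horth hcomplete hf).tendsto_sum_nat
  obtain ⟨ns, hns, hae⟩ := (tendstoInMeasure_of_tendsto_Lp hL2).exists_seq_tendsto_ae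
  have hpartial : ∀ᵐ y ∂μ, ∀ n,
      (∑ k ∈ Finset.range n, c k • (hΨ k).toLp (Ψ k) : Lp ℝ 2 μ) y =
        ∑ k ∈ Finset.range n, c k * Ψ k y := by
    refine ae_all_iff.2 fun n => ?_
    have hcoe : ∀ᵐ y ∂μ, ∀ k, ((hΨ k).toLp (Ψ k) : α → ℝ) y = Ψ k y :=
      ae_all_iff.2 fun k => (hΨ k).coeFn_toLp
    have hsmul : ∀ᵐ y ∂μ, ∀ k, (c k • (hΨ k).toLp (Ψ k) : Lp ℝ 2 μ) y = c k * (hΨ k).toLp (Ψ k) y :=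
      ae_all_iff.2 fun k => Lp.coeFn_smul _ _
    filter_upwards [Lp.coeFn_fun_finsetSum (Finset.range n) fun k => c k • (hΨ k).toLp (Ψ k),
      hcoe, hsmul] with y hy hcoe_y hsmul_y
    simp only [hy, hsmul_y, hcoe_y]
  filter_upwards [hae, hf.coeFn_toLp, hpartial, hsum] with y hlim hfy hpartial_y hsum_y
  refine tendsto_nhds_unique ?_ ((hsum_y.hasSum.tendsto_sum_nat).comp hns.tendsto_atTop)
  rw [← hfy]
  exact hlim.congr fun i => hpartial_y (ns i)

lemma Measure.rnDeriv_le_of_le_withDensity {α : Type*} [MeasurableSpace α] {ν μ : Measure α}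
    [SigmaFinite μ] {g : α → ℝ≥0∞} (h : ν ≤ μ.withDensity g) : ν.rnDeriv μ ≤ᵐ[μ] g :=
  ae_le_of_forall_setLIntegral_le_of_sigmaFinite₀ (Measure.measurable_rnDeriv ν μ).aemeasurable
    fun s hs _ => (Measure.setLIntegral_rnDeriv_le s).trans
      ((Measure.le_iff'.1 h s).trans (withDensity_apply g hs).le)

lemma exists_density_integral_mul_comp_le {Ω β : Type*} [MeasurableSpace Ω] [MeasurableSpace β]
    {P : Measure Ω} [IsFiniteMeasure P] {μ : Measure β} [SigmaFinite μ] {X : Ω → β}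
    (hX : Measurable X) {p : β → ℝ} (hp0 : 0 ≤ p)
    (hlaw : P.map X = μ.withDensity fun y => ENNReal.ofReal (p y))
    {W : Ω → ℝ} (hW : Measurable W) (hW0 : 0 ≤ W) {C : ℝ} (hC : 0 ≤ C) (hWC : ∀ ω, W ω ≤ C) :
    ∃ h : β → ℝ, Measurable h ∧ 0 ≤ h ∧ (∀ᵐ y ∂μ, h y ≤ C * p y) ∧
      ∀ φ : β → ℝ, AEStronglyMeasurable φ μ →
        ∫ ω, W ω * φ (X ω) ∂P = ∫ y, h y * φ y ∂μ := by
  set ν := (P.withDensity fun ω => ENNReal.ofReal (W ω)).map X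
  have hν_le : ν ≤ μ.withDensity (ENNReal.ofReal C • fun y => ENNReal.ofReal (p y)) := by
    rw [withDensity_smul' _ _ ENNReal.ofReal_ne_top, ← hlaw, ← Measure.map_smul,
      ← withDensity_const]
    exact Measure.map_mono (withDensity_mono (ae_of_all _ fun ω => ENNReal.ofReal_le_ofReal
      (hWC ω))) hX
  have hνμ : ν ≪ μ :=
    (Measure.absolutelyContinuous_of_le hν_le).trans (withDensity_absolutelyContinuous _ _)
  have : IsFiniteMeasure ν := by
    have := (P.map X).smul_finite (ENNReal.ofReal_ne_top (r := C))
    refine isFiniteMeasure_of_le ((ENNReal.ofReal C) • P.map X) ?_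
    rwa [withDensity_smul' _ _ ENNReal.ofReal_ne_top, ← hlaw] at hν_le
  refine ⟨fun y => (ν.rnDeriv μ y).toReal, (Measure.measurable_rnDeriv ν μ).ennreal_toReal,
    fun y => ENNReal.toReal_nonneg, ?_, fun φ hφ => ?_⟩
  · filter_upwards [Measure.rnDeriv_le_of_le_withDensity hν_le] with y hy
    refine (ENNReal.toReal_mono (by simp [ENNReal.mul_eq_top]) hy).trans ?_
    simp only [Pi.smul_apply, smul_eq_mul, ENNReal.toReal_mul, ENNReal.toReal_ofReal hC,
      ENNReal.toReal_ofReal (hp0 y), le_refl]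
  · rw [integral_toReal_rnDeriv_mul hνμ, integral_map hX.aemeasurable (hφ.mono_ac hνμ),
      integral_withDensity_eq_integral_toReal_smul (by fun_prop) (ae_of_all _ fun _ =>
        ENNReal.ofReal_lt_top)]
    simp only [ENNReal.toReal_ofReal (hW0 _), smul_eq_mul]

end MeasureTheory

lemma measurable_intervalIntegral_of_continuous_of_measurable {Ω : Type*} [MeasurableSpace Ω]
    {f : ℝ → Ω → ℝ} (hc : ∀ ω, Continuous fun s => f s ω) (hm : ∀ s, Measurable (f s))
    (a b : ℝ) : Measurable fun ω => ∫ s in a..b, f s ω := by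
  have hf : StronglyMeasurable (Function.uncurry fun ω s => f s ω) :=
    ((measurable_uncurry_of_continuous_of_measurable hc hm).comp measurable_swap).stronglyMeasurable
  exact hf.integral_prod_right.measurable.sub hf.integral_prod_right.measurable

lemma intervalIntegral_le_mul_of_le_s12 {g : ℝ → ℝ} (hg : Continuous g) {A : ℝ} (hgA : ∀ s, g s ≤ A)
    {t : ℝ} (ht : 0 ≤ t) : ∫ s in (0 : ℝ)..t, g s ≤ A * t := by
  calc ∫ s in (0 : ℝ)..t, g s ≤ ∫ _ in (0 : ℝ)..t, A :=
        intervalIntegral.integral_mono_on ht (hg.intervalIntegrable 0 t) intervalIntegrable_const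
          fun s _ => hgA s
    _ = A * t := by simp [mul_comm]

namespace IsBrownianMotion

variable {Ω : Type} [MeasurableSpace Ω] {P : Measure Ω} {B : ℝ → Ω → ℝ}

lemma map_const_add (hB : IsBrownianMotion P B) (x : ℝ) {t : ℝ} (ht : 0 ≤ t) :
    P.map (fun ω => x + B t ω) = gaussianReal x t.toNNReal := by
  obtain ⟨-, hBm, hB0, -, hBinc, -⟩ := hB
  have hlaw := hBinc 0 t le_rfl ht
  simp only [hB0, sub_zero] at hlaw
  rw [show (fun ω => x + B t ω) = (x + ·) ∘ B t from rfl,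
    ← Measure.map_map (measurable_const_add x) (hBm t), hlaw, gaussianReal_map_const_add,
    zero_add]

lemma exists_feynmanKac_density (hB : IsBrownianMotion P B) {V : ℝ → ℝ} (hVc : Continuous V)
    {A : ℝ} (hVA : ∀ x, V x ≤ A) {t : ℝ} (ht : 0 < t) (x : ℝ) :
    ∃ h : ℝ → ℝ, MemLp h 2 ∧ ∫ y, h y ^ 2 ≤ exp (A * t) ^ 2 * (2 * √(π * t))⁻¹ ∧
      ∀ φ : ℝ → ℝ, AEStronglyMeasurable φ →
        ∫ ω, exp (∫ s in (0 : ℝ)..t, V (x + B s ω)) * φ (x + B t ω) ∂P = ∫ y, h y * φ y := by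
  have hv : t.toNNReal ≠ 0 := by simpa using ht
  have hlaw : P.map (fun ω => x + B t ω) =
      volume.withDensity fun y => ENNReal.ofReal (gaussianPDFReal x t.toNNReal y) := by
    rw [hB.map_const_add x ht.le, gaussianReal_of_var_ne_zero x hv]
    rfl
  obtain ⟨hP, hBm, -, hBc, -, -⟩ := hB
  obtain ⟨h, hm, h0, hle, hdens⟩ := exists_density_integral_mul_comp_le
    (measurable_const_add x |>.comp (hBm t)) (gaussianPDFReal_nonneg x _) hlaw
    (measurable_intervalIntegral_of_continuous_of_measurable
      (fun ω => hVc.comp (continuous_const.add (hBc ω)))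
      (fun s => hVc.measurable.comp ((hBm s).const_add x)) 0 t).exp
    (fun ω => (exp_pos _).le) (exp_pos (A * t)).le
    (fun ω => exp_le_exp.2 (intervalIntegral_le_mul_of_le_s12
      (hVc.comp (continuous_const.add (hBc ω))) (fun s => hVA _) ht.le))
  have hdom : ∀ᵐ y, ‖h y‖ ≤ ‖exp (A * t) * gaussianPDFReal x t.toNNReal y‖ := by
    filter_upwards [hle] with y hy
    rwa [norm_of_nonneg (h0 y),
      norm_of_nonneg (mul_nonneg (exp_pos _).le (gaussianPDFReal_nonneg _ _ _))]
  have hmem := ((memLp_two_gaussianPDFReal x _).const_mul _).of_le hm.aestronglyMeasurable hdom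
  refine ⟨h, hmem, ?_, hdens⟩
  calc ∫ y, h y ^ 2 ≤ ∫ y, (exp (A * t) * gaussianPDFReal x t.toNNReal y) ^ 2 := by
        refine integral_mono_ae ((memLp_two_iff_integrable_sq hm.aestronglyMeasurable).1 hmem)
          ?_ ?_
        · simp_rw [mul_pow]
          exact (integrable_gaussianPDFReal_sq x _).const_mul _
        · filter_upwards [hle] with y hy
          exact pow_le_pow_left₀ (h0 y) hy 2
    _ = exp (A * t) ^ 2 * (2 * √(π * t))⁻¹ := by
        simp_rw [mul_pow]
        rw [integral_const_mul, integral_gaussianPDFReal_sq x hv, Real.coe_toNNReal _ ht.le]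

end IsBrownianMotion

lemma summable_mul_abs_mul_abs_and_tsum_le {ι : Type*} {a u v : ι → ℝ} {M : ℝ} (ha : 0 ≤ a)
    (hu : Summable fun k => a k * u k ^ 2) (hv : Summable fun k => a k * v k ^ 2)
    (huM : ∑' k, a k * u k ^ 2 ≤ M) (hvM : ∑' k, a k * v k ^ 2 ≤ M) :
    Summable (fun k => a k * |u k| * |v k|) ∧ ∑' k, a k * |u k| * |v k| ≤ M := by
  have hamgm : ∀ k, a k * |u k| * |v k| ≤ (a k * u k ^ 2 + a k * v k ^ 2) / 2 := fun k => by
    have := mul_le_mul_of_nonneg_left (two_mul_le_add_sq |u k| |v k|) (ha k)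
    rw [sq_abs, sq_abs] at this
    linarith
  have hsum : Summable fun k => a k * |u k| * |v k| :=
    ((hu.add hv).div_const 2).of_nonneg_of_le
      (fun k => mul_nonneg (mul_nonneg (ha k) (abs_nonneg _)) (abs_nonneg _)) hamgm
  refine ⟨hsum, ?_⟩
  calc ∑' k, a k * |u k| * |v k| ≤ ∑' k, (a k * u k ^ 2 + a k * v k ^ 2) / 2 :=
        hsum.tsum_le_tsum hamgm ((hu.add hv).div_const 2)
    _ = ((∑' k, a k * u k ^ 2) + ∑' k, a k * v k ^ 2) / 2 := by
        rw [tsum_div_const, hu.tsum_add hv]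
    _ ≤ M := by linarith

lemma exp_neg_mul_le_add_of_mem_Icc (l : ℝ) {a b r : ℝ} (hr : r ∈ Set.Icc a b) :
    exp (-(l * r)) ≤ exp (-(l * a)) + exp (-(l * b)) := by
  rcases le_total 0 l with hl | hl
  · exact (exp_le_exp.2 (by nlinarith [hr.1])).trans (le_add_of_nonneg_right (exp_pos _).le)
  · exact (exp_le_exp.2 (by nlinarith [hr.2])).trans (le_add_of_nonneg_left (exp_pos _).le)

lemma continuousOn_tsum_exp_neg_mul_mul {ι : Type*} {Ψ : ι → ℝ → ℝ} (hΨc : ∀ k, Continuous (Ψ k))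
    {lam : ι → ℝ} (hsumm : ∀ t : ℝ, 0 < t → Summable fun k => exp (-(lam k * t)))
    (hbound : ∀ t : ℝ, 0 < t → ∃ M, ∀ k x y, exp (-(lam k * t)) * |Ψ k x| * |Ψ k y| ≤ M) :
    ContinuousOn (fun q : ℝ × ℝ × ℝ => ∑' k, exp (-(lam k * q.1)) * Ψ k q.2.1 * Ψ k q.2.2)
      {q | 0 < q.1} := by
  refine continuousOn_of_forall_continuousAt fun q₀ (hq₀ : 0 < q₀.1) => ?_
  set s := q₀.1 / 4 with hs
  obtain ⟨M, hM⟩ := hbound s (by positivity)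
  have hU : IsOpen {q : ℝ × ℝ × ℝ | q₀.1 / 2 < q.1 ∧ q.1 < 2 * q₀.1} :=
    (isOpen_lt continuous_const continuous_fst).inter (isOpen_lt continuous_fst continuous_const)
  have hterm : ∀ k, ∀ q ∈ {q : ℝ × ℝ × ℝ | q₀.1 / 2 < q.1 ∧ q.1 < 2 * q₀.1},
      ‖exp (-(lam k * q.1)) * Ψ k q.2.1 * Ψ k q.2.2‖ ≤
        (exp (-(lam k * s)) + exp (-(lam k * (2 * q₀.1)))) * M := by
    rintro k q ⟨hq_lo, hq_hi⟩
    calc ‖exp (-(lam k * q.1)) * Ψ k q.2.1 * Ψ k q.2.2‖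
        = exp (-(lam k * (q.1 - s))) * (exp (-(lam k * s)) * |Ψ k q.2.1| * |Ψ k q.2.2|) := by
          rw [norm_mul, norm_mul, norm_of_nonneg (exp_pos _).le, norm_eq_abs, norm_eq_abs,
            ← mul_assoc, ← mul_assoc, ← exp_add]
          ring_nf
      _ ≤ (exp (-(lam k * s)) + exp (-(lam k * (2 * q₀.1)))) * M :=
          mul_le_mul (exp_neg_mul_le_add_of_mem_Icc _ ⟨by linarith, by linarith⟩) (hM k _ _)
            (by positivity) (by positivity)
  refine (continuousOn_tsum (fun k => Continuous.continuousOn (by fun_prop))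
    (((hsumm s (by positivity)).add (hsumm (2 * q₀.1) (by positivity))).mul_right M)
    hterm).continuousAt (hU.mem_nhds ⟨by linarith, by linarith⟩)

section EigenfunctionExpansion

variable {Ω : Type} [MeasurableSpace Ω] {P : Measure Ω} {B : ℝ → Ω → ℝ} {V : ℝ → ℝ} {A : ℝ}
  {Ψ : ℕ → ℝ → ℝ} {lam : ℕ → ℝ}

lemma exists_feynmanKac_density_of_eigen (hB : IsBrownianMotion P B) (hVc : Continuous V)
    (hVA : ∀ x, V x ≤ A) (hΨ : ∀ k, MemLp (Ψ k) 2)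
    (heigen : ∀ k t, 0 < t → ∀ x : ℝ,
      ∫ ω, exp (∫ s in (0 : ℝ)..t, V (x + B s ω)) * Ψ k (x + B t ω) ∂P = exp (-(lam k * t)) * Ψ k x)
    {t : ℝ} (ht : 0 < t) (x : ℝ) :
    ∃ h : ℝ → ℝ, MemLp h 2 ∧ ∫ y, h y ^ 2 ≤ exp (A * t) ^ 2 * (2 * √(π * t))⁻¹ ∧
      (∀ k, ∫ y, h y * Ψ k y = exp (-(lam k * t)) * Ψ k x) ∧
      ∀ φ : ℝ → ℝ, AEStronglyMeasurable φ →
        ∫ ω, exp (∫ s in (0 : ℝ)..t, V (x + B s ω)) * φ (x + B t ω) ∂P = ∫ y, h y * φ y := by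
  obtain ⟨h, hmem, hsq, hdens⟩ := hB.exists_feynmanKac_density hVc hVA ht x
  exact ⟨h, hmem, hsq, fun k => (hdens _ (hΨ k).1).symm.trans (heigen k t ht x), hdens⟩

lemma summable_exp_neg_mul_sq_and_tsum_le (hB : IsBrownianMotion P B) (hVc : Continuous V)
    (hVA : ∀ x, V x ≤ A) (hΨ : ∀ k, MemLp (Ψ k) 2)
    (horth : ∀ j k, ∫ x, Ψ j x * Ψ k x = if j = k then 1 else 0)
    (heigen : ∀ k t, 0 < t → ∀ x : ℝ,
      ∫ ω, exp (∫ s in (0 : ℝ)..t, V (x + B s ω)) * Ψ k (x + B t ω) ∂P = exp (-(lam k * t)) * Ψ k x)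
    {t : ℝ} (ht : 0 < t) (x : ℝ) :
    Summable (fun k => exp (-(lam k * t)) * Ψ k x ^ 2) ∧
      ∑' k, exp (-(lam k * t)) * Ψ k x ^ 2 ≤ exp (A * t) / √(2 * π * t) := by
  obtain ⟨h, hmem, hsq, hcoef, -⟩ :=
    exists_feynmanKac_density_of_eigen hB hVc hVA hΨ heigen (half_pos ht) x
  have hcoef_sq : ∀ k, (∫ y, h y * Ψ k y) ^ 2 = exp (-(lam k * t)) * Ψ k x ^ 2 := fun k => by
    rw [hcoef, mul_pow, sq (exp _), ← exp_add]
    ring_nf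
  have hbound : exp (A * (t / 2)) ^ 2 * (2 * √(π * (t / 2)))⁻¹ = exp (A * t) / √(2 * π * t) := by
    rw [← exp_nat_mul, show 2 * π * t = 2 ^ 2 * (π * (t / 2)) by ring,
      sqrt_mul (by positivity : (0 : ℝ) ≤ 2 ^ 2), sqrt_sq zero_le_two]
    push_cast
    ring_nf
  simp only [← hcoef_sq]
  exact ⟨summable_sq_integral_mul hΨ horth hmem,
    (tsum_sq_integral_mul_le hΨ horth hmem).trans (hsq.trans_eq hbound)⟩

lemma integral_feynmanKac_mul_eq_integral_tsum_mul (hB : IsBrownianMotion P B)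
    (hVc : Continuous V) (hVA : ∀ x, V x ≤ A) (hΨ : ∀ k, MemLp (Ψ k) 2)
    (horth : ∀ j k, ∫ x, Ψ j x * Ψ k x = if j = k then 1 else 0)
    (hcomplete : ∀ f : ℝ → ℝ, MemLp f 2 → (∀ k, ∫ x, f x * Ψ k x = 0) → f =ᵐ[volume] 0)
    (heigen : ∀ k t, 0 < t → ∀ x : ℝ,
      ∫ ω, exp (∫ s in (0 : ℝ)..t, V (x + B s ω)) * Ψ k (x + B t ω) ∂P = exp (-(lam k * t)) * Ψ k x)
    {t : ℝ} (ht : 0 < t) (x : ℝ)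
    (hsum : ∀ y, Summable fun k => exp (-(lam k * t)) * Ψ k x * Ψ k y)
    {φ : ℝ → ℝ} (hφ : AEStronglyMeasurable φ) :
    ∫ ω, exp (∫ s in (0 : ℝ)..t, V (x + B s ω)) * φ (x + B t ω) ∂P =
      ∫ y, (∑' k, exp (-(lam k * t)) * Ψ k x * Ψ k y) * φ y := by
  obtain ⟨h, hmem, -, hcoef, hdens⟩ := exists_feynmanKac_density_of_eigen hB hVc hVA hΨ heigen ht x
  have hexpansion := ae_eq_tsum_integral_mul hΨ horth hcomplete hmem
    (ae_of_all _ fun y => by simpa only [hcoef] using hsum y)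
  simp only [hcoef] at hexpansion
  rw [hdens φ hφ]
  exact integral_congr_ae (hexpansion.mono fun y hy => congrArg (· * φ y) hy)

end EigenfunctionExpansion

theorem transition_density_expansion_general
    {Ω : Type} [MeasurableSpace Ω] (P : Measure Ω) (B : ℝ → Ω → ℝ)
    (hB : IsBrownianMotion P B)
    (Vt : ℝ → ℝ) (Atil : ℝ) (hVc : Continuous Vt) (hVb : ∀ x, Vt x ≤ Atil)
    (Ψ : ℕ → ℝ → ℝ) (hΨc : ∀ k, Continuous (Ψ k))
    -- (Ψ_k) is orthonormal in L²(ℝ, dx) ...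
    (horth : ∀ j k : ℕ, (∫ x : ℝ, Ψ j x * Ψ k x) = if j = k then 1 else 0)
    -- ... and complete (an orthonormal basis):
    (hcomplete : ∀ f : ℝ → ℝ, MemLp f 2 volume →
      (∀ k, (∫ x : ℝ, f x * Ψ k x) = 0) → f =ᵐ[volume] 0)
    (lam : ℕ → ℝ)
    (hsumm : ∀ t : ℝ, 0 < t → Summable fun k => Real.exp (-(lam k * t)))
    (heigen : ∀ (k : ℕ) (t : ℝ), 0 < t → ∀ x : ℝ,
      (∫ ω, Real.exp (∫ s in (0:ℝ)..t, Vt (x + B s ω)) * Ψ k (x + B t ω) ∂P) =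
        Real.exp (-(lam k * t)) * Ψ k x) :
    -- (i) absolute convergence with the Gaussian bound
    (∀ (t : ℝ), 0 < t → ∀ x y : ℝ,
      Summable (fun k => Real.exp (-(lam k * t)) * |Ψ k x| * |Ψ k y|) ∧
      (∑' k, Real.exp (-(lam k * t)) * |Ψ k x| * |Ψ k y|) ≤
        Real.exp (Atil * t) / Real.sqrt (2 * Real.pi * t)) ∧
    -- (ii) p̃ is a transition density for the semigroup
    (∀ φ : ℝ → ℝ, MemLp φ 2 volume → ∀ (t : ℝ), 0 < t → ∀ x : ℝ,
      (∫ ω, Real.exp (∫ s in (0:ℝ)..t, Vt (x + B s ω)) * φ (x + B t ω) ∂P) =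
        ∫ y, (∑' k, Real.exp (-(lam k * t)) * Ψ k x * Ψ k y) * φ y) ∧
    -- (iii) p̃ is continuous on (0,∞) × ℝ²
    ContinuousOn
      (fun q : ℝ × ℝ × ℝ => ∑' k, Real.exp (-(lam k * q.1)) * Ψ k q.2.1 * Ψ k q.2.2)
      {q : ℝ × ℝ × ℝ | 0 < q.1} := by
  have hΨ : ∀ k, MemLp (Ψ k) 2 := fun k =>
    memLp_two_of_integral_mul_self_eq_one (hΨc k).aestronglyMeasurable (by simpa using horth k k)
  have hdiag := fun t (ht : 0 < t) x =>
    summable_exp_neg_mul_sq_and_tsum_le hB hVc hVb hΨ horth heigen ht x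
  have hkernel_abs : ∀ t, 0 < t → ∀ x y,
      Summable (fun k => exp (-(lam k * t)) * |Ψ k x| * |Ψ k y|) ∧
        ∑' k, exp (-(lam k * t)) * |Ψ k x| * |Ψ k y| ≤ exp (Atil * t) / √(2 * π * t) :=
    fun t ht x y => summable_mul_abs_mul_abs_and_tsum_le (fun k => (exp_pos _).le)
      (hdiag t ht x).1 (hdiag t ht y).1 (hdiag t ht x).2 (hdiag t ht y).2
  refine ⟨hkernel_abs, fun φ hφ t ht x => ?_, ?_⟩
  · refine integral_feynmanKac_mul_eq_integral_tsum_mul hB hVc hVb hΨ horth hcomplete heigen ht x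
      (fun y => Summable.of_abs ?_) hφ.1
    simpa only [abs_mul, abs_exp] using (hkernel_abs t ht x y).1
  · refine continuousOn_tsum_exp_neg_mul_mul hΨc hsumm fun t ht =>
      ⟨exp (Atil * t) / √(2 * π * t), fun k x y => ?_⟩
    exact (hkernel_abs t ht x y).1.le_tsum k (fun j _ => by positivity) |>.trans
      (hkernel_abs t ht x y).2

/-- Proposition 3.4(iii)-(iv): the eigenfunction expansion
`p̃(t,x,y) = ∑ e^{-λ_k t}Ψ_k(x)Ψ_k(y)` converges absolutely with bound `e^{Ãt}/√(2πt)`, is a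
transition density for the Feynman–Kac semigroup, and is continuous on `(0,∞) × ℝ²`. -/
theorem transition_density_expansion
    {Ω : Type} [MeasurableSpace Ω] (P : Measure Ω) (B : ℝ → Ω → ℝ)
    (hB : IsBrownianMotion P B)
    (Vt : ℝ → ℝ) (Atil : ℝ) (hVc : Continuous Vt) (hVb : ∀ x, Vt x ≤ Atil)
    (Ψ : ℕ → ℝ → ℝ) (hΨc : ∀ k, Continuous (Ψ k))
    -- (Ψ_k) is orthonormal in L²(ℝ, dx) ...
    (horth : ∀ j k : ℕ, (∫ x : ℝ, Ψ j x * Ψ k x) = if j = k then 1 else 0)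
    -- ... and complete (an orthonormal basis):
    (hcomplete : ∀ f : ℝ → ℝ, MemLp f 2 volume →
      (∀ k, (∫ x : ℝ, f x * Ψ k x) = 0) → f =ᵐ[volume] 0)
    (lam : ℕ → ℝ) (hmono : Monotone lam)
    (hsumm : ∀ t : ℝ, 0 < t → Summable fun k => Real.exp (-(lam k * t)))
    (heigen : ∀ (k : ℕ) (t : ℝ), 0 < t → ∀ x : ℝ,
      (∫ ω, Real.exp (∫ s in (0:ℝ)..t, Vt (x + B s ω)) * Ψ k (x + B t ω) ∂P) =
        Real.exp (-(lam k * t)) * Ψ k x) :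
    -- (i) absolute convergence with the Gaussian bound
    (∀ (t : ℝ), 0 < t → ∀ x y : ℝ,
      Summable (fun k => Real.exp (-(lam k * t)) * |Ψ k x| * |Ψ k y|) ∧
      (∑' k, Real.exp (-(lam k * t)) * |Ψ k x| * |Ψ k y|) ≤
        Real.exp (Atil * t) / Real.sqrt (2 * Real.pi * t)) ∧
    -- (ii) p̃ is a transition density for the semigroup
    (∀ φ : ℝ → ℝ, MemLp φ 2 volume → ∀ (t : ℝ), 0 < t → ∀ x : ℝ,
      (∫ ω, Real.exp (∫ s in (0:ℝ)..t, Vt (x + B s ω)) * φ (x + B t ω) ∂P) =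
        ∫ y, (∑' k, Real.exp (-(lam k * t)) * Ψ k x * Ψ k y) * φ y) ∧
    -- (iii) p̃ is continuous on (0,∞) × ℝ²
    ContinuousOn
      (fun q : ℝ × ℝ × ℝ => ∑' k, Real.exp (-(lam k * q.1)) * Ψ k q.2.1 * Ψ k q.2.2)
      {q : ℝ × ℝ × ℝ | 0 < q.1} :=
  transition_density_expansion_general P B hB Vt Atil hVc hVb Ψ hΨc horth hcomplete lam hsumm heigen
end
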